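/- arXiv:2503.13921 — 4 statements merged into one kernel-verified Lean document; each statement's English description precedes it below -/
import Mathlib

section
/- (Theorem 3.1, uniqueness of the minimal imputation set for SVM) Consider a feature matrix X ∈ ℝ^{n×d} with missing entries constrained to closed intervals, labels y ∈ {−1,+1}ⁿ, and regularization parameter C > 0. If S and S′ are both minimal imputation sets for SVM over (X, y, C), then S = S′; i.e., the minimal imputation set is unique. -/
/-- Soft-margin SVM loss over data `(X, y)` with regularization parameter `C`. -/
noncomputable def svmLoss {n d : ℕ} (C : ℝ) (X : Fin n → Fin d → ℝ)
    (y : Fin n → ℝ) (w : Fin d → ℝ) : ℝ :=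
  (1 / 2) * ∑ j, (w j) ^ 2 + C * ∑ i, max 0 (1 - y i * ∑ j, w j * X i j)

/-- `Xr` is a repair of `X` w.r.t. the missing-entry set `M` and interval bounds `a`, `b`:
it agrees with `X` on non-missing entries and assigns each missing entry `(i,j)` a value
in `[a i j, b i j]`. -/
def IsRepair {n d : ℕ} (M : Set (Fin n × Fin d)) (a b X Xr : Fin n → Fin d → ℝ) : Prop :=
  (∀ i j, (i, j) ∉ M → Xr i j = X i j) ∧
  (∀ i j, (i, j) ∈ M → Xr i j ∈ Set.Icc (a i j) (b i j))

/-- An edge repair is a repair in which every missing entry takes an endpoint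
of its interval. -/
def IsEdgeRepair {n d : ℕ} (M : Set (Fin n × Fin d)) (a b X Xr : Fin n → Fin d → ℝ) : Prop :=
  IsRepair M a b X Xr ∧ ∀ i j, (i, j) ∈ M → Xr i j = a i j ∨ Xr i j = b i j

/-- Example `i` is incomplete if its row contains a missing entry. -/
def IncompleteExample {n d : ℕ} (M : Set (Fin n × Fin d)) (i : Fin n) : Prop :=
  ∃ j, (i, j) ∈ M

/-- A certain model: `w` minimizes the SVM loss over every repair of `X`. -/
def CertainModel {n d : ℕ} (C : ℝ) (M : Set (Fin n × Fin d))
    (a b X : Fin n → Fin d → ℝ) (y : Fin n → ℝ) (w : Fin d → ℝ) : Prop :=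
  ∀ Xr, IsRepair M a b X Xr → ∀ w', svmLoss C Xr y w ≤ svmLoss C Xr y w'

/-- A set `S` of examples is imputation-sufficient if for every assignment of values
(within the prescribed intervals) to the missing entries of examples in `S`, the
resulting data (remaining missing entries `{p ∈ M | p.1 ∉ S}`) admits a certain model. -/
def ImputationSufficient {n d : ℕ} (C : ℝ) (M : Set (Fin n × Fin d))
    (a b X : Fin n → Fin d → ℝ) (y : Fin n → ℝ) (S : Finset (Fin n)) : Prop :=
  ∀ ρ : Fin n → Fin d → ℝ,
    (∀ i j, (i, j) ∈ M → i ∈ S → ρ i j ∈ Set.Icc (a i j) (b i j)) →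
    (∀ i j, ¬((i, j) ∈ M ∧ i ∈ S) → ρ i j = X i j) →
    ∃ w, CertainModel C {p ∈ M | p.1 ∉ S} a b ρ y w

/-- A minimal imputation set: an imputation-sufficient set of incomplete examples
of minimum cardinality. -/
def MinimalImputationSet {n d : ℕ} (C : ℝ) (M : Set (Fin n × Fin d))
    (a b X : Fin n → Fin d → ℝ) (y : Fin n → ℝ) (S : Finset (Fin n)) : Prop :=
  (∀ i ∈ S, IncompleteExample M i) ∧
  ImputationSufficient C M a b X y S ∧
  ∀ S' : Finset (Fin n), (∀ i ∈ S', IncompleteExample M i) →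
    ImputationSufficient C M a b X y S' → S.card ≤ S'.card

/-
The SVM loss is strictly convex in `w` (convex hinge terms plus the strictly convex
`‖w‖² / 2`), so it has at most one minimiser on each repair, and certain models of data
that share a repair coincide. Imputing the rows of `S` from a repair `R` leaves exactly
the repairs that agree with `R` on those rows. Now let `S`, `S'` be sufficient and let `Z`
be a repair agreeing with `R` on the rows of `S ∩ S'`. The repair equal to `Z` on the rows
of `S` and to `R` elsewhere agrees with `Z` on `S` and with `R` on `S'`, so the certain
model for `R` on `S'` is also the one for `Z` on `S`, and in particular optimal on `Z`.
Hence `S ∩ S'` is sufficient, and two minimal sets both equal their intersection.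
-/

open Finset

lemma max_zero_midpoint_le (u v : ℝ) : max 0 ((u + v) / 2) ≤ (max 0 u + max 0 v) / 2 :=
  max_le (by positivity) (by linarith [le_max_right 0 u, le_max_right 0 v])

lemma svmLoss_midpoint_le {n d : ℕ} {C : ℝ} (hC : 0 ≤ C) (X : Fin n → Fin d → ℝ)
    (y : Fin n → ℝ) (w w' : Fin d → ℝ) :
    svmLoss C X y (fun j => (w j + w' j) / 2)
      ≤ (svmLoss C X y w + svmLoss C X y w') / 2 - (∑ j, (w j - w' j) ^ 2) / 8 := by
  have hinge : ∑ i, max 0 (1 - y i * ∑ j, (w j + w' j) / 2 * X i j)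
      ≤ (∑ i, max 0 (1 - y i * ∑ j, w j * X i j)
        + ∑ i, max 0 (1 - y i * ∑ j, w' j * X i j)) / 2 := by
    rw [← sum_add_distrib, sum_div]
    refine sum_le_sum fun i _ => ?_
    have hmid : 1 - y i * ∑ j, (w j + w' j) / 2 * X i j
        = ((1 - y i * ∑ j, w j * X i j) + (1 - y i * ∑ j, w' j * X i j)) / 2 := by
      simp only [add_div, add_mul, sum_add_distrib, div_mul_eq_mul_div, ← sum_div]
      ring
    exact hmid ▸ max_zero_midpoint_le _ _
  have square : ∑ j, ((w j + w' j) / 2) ^ 2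
      = (∑ j, w j ^ 2 + ∑ j, w' j ^ 2) / 2 - (∑ j, (w j - w' j) ^ 2) / 4 := by
    rw [← sum_add_distrib, sum_div, sum_div, ← sum_sub_distrib]
    exact sum_congr rfl fun j _ => by ring
  unfold svmLoss
  nlinarith [mul_le_mul_of_nonneg_left hinge hC]

lemma svmLoss_minimizer_unique {n d : ℕ} {C : ℝ} (hC : 0 ≤ C) (X : Fin n → Fin d → ℝ)
    (y : Fin n → ℝ) {w w' : Fin d → ℝ}
    (hw : ∀ v, svmLoss C X y w ≤ svmLoss C X y v)
    (hw' : ∀ v, svmLoss C X y w' ≤ svmLoss C X y v) : w = w' := by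
  have hsq : ∑ j, (w j - w' j) ^ 2 = 0 := by
    refine le_antisymm ?_ (sum_nonneg fun j _ => sq_nonneg _)
    linarith [svmLoss_midpoint_le hC X y w w', hw (fun j => (w j + w' j) / 2), hw' w]
  funext j
  rw [sum_eq_zero_iff_of_nonneg fun j _ => sq_nonneg _] at hsq
  exact sub_eq_zero.mp (pow_eq_zero_iff two_ne_zero |>.mp (hsq j (mem_univ j)))

section Repairs

variable {n d : ℕ} {M : Set (Fin n × Fin d)} {a b X : Fin n → Fin d → ℝ}

lemma isRepair_restrict_iff {S : Finset (Fin n)} {ρ Z : Fin n → Fin d → ℝ}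
    (hρM : ∀ i ∈ S, ∀ j, (i, j) ∈ M → ρ i j ∈ Set.Icc (a i j) (b i j))
    (hρX : ∀ i j, (i, j) ∉ M → ρ i j = X i j) :
    IsRepair {p ∈ M | p.1 ∉ S} a b ρ Z ↔ IsRepair M a b X Z ∧ Set.EqOn Z ρ S := by
  constructor
  · rintro ⟨hoff, hon⟩
    have hrow : Set.EqOn Z ρ S := fun i hi => funext fun j => hoff i j fun h => h.2 hi
    refine ⟨⟨fun i j hM => (hoff i j fun h => hM h.1).trans (hρX i j hM), fun i j hM => ?_⟩, hrow⟩
    by_cases hi : i ∈ S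
    · exact congrFun (hrow hi) j ▸ hρM i hi j hM
    · exact hon i j ⟨hM, hi⟩
  · rintro ⟨⟨hoff, hon⟩, hrow⟩
    refine ⟨fun i j h => ?_, fun i j h => hon i j h.1⟩
    by_cases hM : (i, j) ∈ M
    · exact congrFun (hrow (not_not.mp fun hi => h ⟨hM, hi⟩)) j
    · exact (hoff i j hM).trans (hρX i j hM).symm

lemma IsRepair.piecewise {R Z : Fin n → Fin d → ℝ} (S : Finset (Fin n))
    (hZ : IsRepair M a b X Z) (hR : IsRepair M a b X R) :
    IsRepair M a b X (S.piecewise Z R) := by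
  refine ⟨fun i j hM => ?_, fun i j hM => ?_⟩ <;> by_cases hi : i ∈ S <;>
    simp only [piecewise_eq_of_mem, piecewise_eq_of_notMem, hi, not_false_eq_true]
  exacts [hZ.1 i j hM, hR.1 i j hM, hZ.2 i j hM, hR.2 i j hM]

variable {C : ℝ} {y : Fin n → ℝ} {S S' : Finset (Fin n)}

theorem imputationSufficient_iff_forall_isRepair :
    ImputationSufficient C M a b X y S ↔ ∀ R, IsRepair M a b X R → ∃ w, ∀ Z,
      IsRepair M a b X Z → Set.EqOn Z R S → ∀ w', svmLoss C Z y w ≤ svmLoss C Z y w' := by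
  constructor
  · intro hS R hR
    have hρM : ∀ i ∈ S, ∀ j, (i, j) ∈ M → S.piecewise R X i j ∈ Set.Icc (a i j) (b i j) :=
      fun i hi j hM => by simpa [hi] using hR.2 i j hM
    have hρX : ∀ i j, (i, j) ∉ M → S.piecewise R X i j = X i j := fun i j hM => by
      by_cases hi : i ∈ S <;> simp [hi, hR.1 i j hM]
    obtain ⟨w, hw⟩ := hS (S.piecewise R X) (fun i j hM hi => hρM i hi j hM)
      fun i j h => by
        by_cases hi : i ∈ S
        · exact hρX i j fun hM => h ⟨hM, hi⟩
        · simp [hi]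
    refine ⟨w, fun Z hZ hrow => hw Z ((isRepair_restrict_iff hρM hρX).mpr ⟨hZ, ?_⟩)⟩
    exact fun i hi => (hrow hi).trans (S.piecewise_eq_of_mem R X (mem_coe.mp hi)).symm
  · intro h ρ hρM hρX
    have hρM' : ∀ i ∈ S, ∀ j, (i, j) ∈ M → ρ i j ∈ Set.Icc (a i j) (b i j) :=
      fun i hi j hM => hρM i j hM hi
    have hρX' : ∀ i j, (i, j) ∉ M → ρ i j = X i j := fun i j hM => hρX i j fun h => hM h.1
    by_cases hex : ∃ Z₀, IsRepair {p ∈ M | p.1 ∉ S} a b ρ Z₀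
    · obtain ⟨Z₀, hZ₀⟩ := hex
      obtain ⟨hZ₀X, hZ₀ρ⟩ := (isRepair_restrict_iff hρM' hρX').mp hZ₀
      obtain ⟨w, hw⟩ := h Z₀ hZ₀X
      refine ⟨w, fun Z hZ => ?_⟩
      obtain ⟨hZX, hZρ⟩ := (isRepair_restrict_iff hρM' hρX').mp hZ
      exact hw Z hZX fun i hi => (hZρ hi).trans (hZ₀ρ hi).symm
    · exact ⟨0, fun Z hZ => absurd ⟨Z, hZ⟩ hex⟩

theorem ImputationSufficient.inter (hC : 0 ≤ C) (hS : ImputationSufficient C M a b X y S)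
    (hS' : ImputationSufficient C M a b X y S') :
    ImputationSufficient C M a b X y (S ∩ S') := by
  rw [imputationSufficient_iff_forall_isRepair] at hS hS' ⊢
  intro R hR
  obtain ⟨w, hw⟩ := hS' R hR
  refine ⟨w, fun Z hZ hZR => ?_⟩
  obtain ⟨wZ, hwZ⟩ := hS Z hZ
  set Y := S.piecewise Z R
  have hYZ : Set.EqOn Y Z S := fun i hi => S.piecewise_eq_of_mem Z R (mem_coe.mp hi)
  have hYR : Set.EqOn Y R S' := fun i hi => by
    by_cases hiS : i ∈ S
    · exact (S.piecewise_eq_of_mem Z R hiS).trans (hZR (by simp [hiS, mem_coe.mp hi]))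
    · exact S.piecewise_eq_of_notMem Z R hiS
  have hY := hZ.piecewise S hR
  have hw_eq : wZ = w := svmLoss_minimizer_unique hC Y y (hwZ Y hY hYZ) (hw Y hY hYR)
  exact hw_eq ▸ hwZ Z hZ fun _ _ => rfl

theorem MinimalImputationSet.eq_of_subset {T : Finset (Fin n)}
    (hS : MinimalImputationSet C M a b X y S) (hTS : T ⊆ S)
    (hT : ImputationSufficient C M a b X y T) : T = S :=
  eq_of_subset_of_card_le hTS (hS.2.2 T (fun i hi => hS.1 i (hTS hi)) hT)

end Repairs

theorem minimal_imputation_set_unique_svm_general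
    (n d : ℕ) (X : Fin n → Fin d → ℝ) (M : Set (Fin n × Fin d))
    (a b : Fin n → Fin d → ℝ)
    (y : Fin n → ℝ) (C : ℝ) (hC : 0 < C)
    (S S' : Finset (Fin n))
    (hS : MinimalImputationSet C M a b X y S)
    (hS' : MinimalImputationSet C M a b X y S') :
    S = S' := by
  have hT := hS.2.1.inter hC.le hS'.2.1
  rw [← hS.eq_of_subset inter_subset_left hT, hS'.eq_of_subset inter_subset_right hT]

/-- Theorem 3.1: the minimal imputation set for SVM is unique. -/
theorem minimal_imputation_set_unique_svm
    (n d : ℕ) (X : Fin n → Fin d → ℝ) (M : Set (Fin n × Fin d))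
    (a b : Fin n → Fin d → ℝ) (hab : ∀ i j, (i, j) ∈ M → a i j ≤ b i j)
    (y : Fin n → ℝ) (hy : ∀ i, y i = 1 ∨ y i = -1) (C : ℝ) (hC : 0 < C)
    (S S' : Finset (Fin n))
    (hS : MinimalImputationSet C M a b X y S)
    (hS' : MinimalImputationSet C M a b X y S') :
    S = S' :=
  minimal_imputation_set_unique_svm_general n d X M a b y C hC S S' hS hS'
end

section
/- (Theorem 4.1, first part) There exists a training set for linear regression with missing entries that has more than one minimal imputation set. Concretely, there exist n, d, a feature matrix X ∈ ℝ^{n×d} with a nonempty set of missing entries (each missing entry ranging over a prescribed set of reals), and a label vector y ∈ ℝⁿ, such that two distinct sets S₁ ≠ S₂ of incomplete features are both minimal imputation sets for linear regression over (X, y). -/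
/-- Squared-error linear regression loss `‖Xw − y‖₂²`. -/
def lrLoss {n d : ℕ} (X : Fin n → Fin d → ℝ) (y : Fin n → ℝ) (w : Fin d → ℝ) : ℝ :=
  ∑ i, ((∑ j, X i j * w j) - y i) ^ 2

/-- `Xr` is a repair of `X` w.r.t. the missing-entry set `M`: it agrees with `X` on
non-missing entries and assigns each missing entry `(i,j)` a value from its
prescribed set `D i j`. -/
def IsRepairLR {n d : ℕ} (M : Set (Fin n × Fin d)) (D : Fin n → Fin d → Set ℝ)
    (X Xr : Fin n → Fin d → ℝ) : Prop :=
  (∀ i j, (i, j) ∉ M → Xr i j = X i j) ∧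
  (∀ i j, (i, j) ∈ M → Xr i j ∈ D i j)

/-- Feature (column) `j` is incomplete if it contains a missing entry. -/
def IncompleteFeature {n d : ℕ} (M : Set (Fin n × Fin d)) (j : Fin d) : Prop :=
  ∃ i, (i, j) ∈ M

/-- A certain model: `w` minimizes `‖Xʳw − y‖₂²` for every repair `Xʳ` of `X`. -/
def CertainModelLR {n d : ℕ} (M : Set (Fin n × Fin d)) (D : Fin n → Fin d → Set ℝ)
    (X : Fin n → Fin d → ℝ) (y : Fin n → ℝ) (w : Fin d → ℝ) : Prop :=
  ∀ Xr, IsRepairLR M D X Xr → ∀ w', lrLoss Xr y w ≤ lrLoss Xr y w'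

/-- A set `S` of features is imputation-sufficient if for every assignment of values
(from the prescribed sets) to the missing entries lying in features of `S`, the
resulting data (remaining missing entries `{p ∈ M | p.2 ∉ S}`) admits a certain model. -/
def ImputationSufficientLR {n d : ℕ} (M : Set (Fin n × Fin d)) (D : Fin n → Fin d → Set ℝ)
    (X : Fin n → Fin d → ℝ) (y : Fin n → ℝ) (S : Finset (Fin d)) : Prop :=
  ∀ ρ : Fin n → Fin d → ℝ,
    (∀ i j, (i, j) ∈ M → j ∈ S → ρ i j ∈ D i j) →
    (∀ i j, ¬((i, j) ∈ M ∧ j ∈ S) → ρ i j = X i j) →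
    ∃ w, CertainModelLR {p ∈ M | p.2 ∉ S} D ρ y w

/-- A minimal imputation set: an imputation-sufficient set of incomplete features
of minimum cardinality. -/
def MinimalImputationSetLR {n d : ℕ} (M : Set (Fin n × Fin d)) (D : Fin n → Fin d → Set ℝ)
    (X : Fin n → Fin d → ℝ) (y : Fin n → ℝ) (S : Finset (Fin d)) : Prop :=
  (∀ j ∈ S, IncompleteFeature M j) ∧
  ImputationSufficientLR M D X y S ∧
  ∀ S' : Finset (Fin d), (∀ j ∈ S', IncompleteFeature M j) →
    ImputationSufficientLR M D X y S' → S.card ≤ S'.card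

/-! A single sample `(0, 0) ↦ 1` whose two features are both missing with values in `{0, 1}`.
Without imputation no model is certain: the repairs `(1, 0)` and `(0, 1)` force `w = (1, 1)`,
which fails on the repair `(1, 1)`. Imputing either feature suffices: once its value `a` is
known, `w` with weight `a` on it and `1 - a` on the other fits every repair exactly, except the
all-zero row, on which every model has the same loss. By symmetry both singletons are minimal. -/

section LinearRegression

variable {n d : ℕ}

lemma lrLoss_eq_zero_iff (X : Fin n → Fin d → ℝ) (y : Fin n → ℝ) (w : Fin d → ℝ) :
    lrLoss X y w = 0 ↔ ∀ i, ∑ j, X i j * w j = y i := by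
  simp only [lrLoss, Finset.sum_eq_zero_iff_of_nonneg (fun i _ => sq_nonneg _),
    Finset.mem_univ, true_implies, pow_eq_zero_iff two_ne_zero, sub_eq_zero]

lemma lrLoss_le_of_forall_fit_or_row_eq_zero {X : Fin n → Fin d → ℝ} {y : Fin n → ℝ}
    {w : Fin d → ℝ} (h : ∀ i, ∑ j, X i j * w j = y i ∨ ∀ j, X i j = 0) (w' : Fin d → ℝ) :
    lrLoss X y w ≤ lrLoss X y w' := by
  refine Finset.sum_le_sum fun i _ => ?_
  rcases h i with hfit | hzero
  · rw [hfit, sub_self, sq, zero_mul]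
    exact sq_nonneg _
  · simp [hzero]

lemma CertainModelLR.fits_of_fits {M : Set (Fin n × Fin d)} {D : Fin n → Fin d → Set ℝ}
    {X Xr : Fin n → Fin d → ℝ} {y : Fin n → ℝ} {w : Fin d → ℝ}
    (hw : CertainModelLR M D X y w) (hXr : IsRepairLR M D X Xr) {w' : Fin d → ℝ}
    (hw' : ∀ i, ∑ j, Xr i j * w' j = y i) : ∀ i, ∑ j, Xr i j * w j = y i := by
  rw [← lrLoss_eq_zero_iff] at hw' ⊢
  exact le_antisymm (hw' ▸ hw Xr hXr w') (Finset.sum_nonneg fun i _ => sq_nonneg _)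

end LinearRegression

def binaryDomain : Fin 1 → Fin 2 → Set ℝ := fun _ _ => {0, 1}

lemma not_imputationSufficientLR_empty :
    ¬ ImputationSufficientLR Set.univ binaryDomain 0 1 ∅ := by
  intro hsuff
  obtain ⟨w, hw⟩ := hsuff 0 (fun _ _ _ h => absurd h (Finset.notMem_empty _)) (fun _ _ _ => rfl)
  have fits (a b : ℝ) (ha : a = 0 ∨ a = 1) (hb : b = 0 ∨ b = 1) (w' : Fin 2 → ℝ)
      (hw' : a * w' 0 + b * w' 1 = 1) : a * w 0 + b * w 1 = 1 := by
    have hrepair : IsRepairLR {p ∈ Set.univ | p.2 ∉ (∅ : Finset (Fin 2))} binaryDomain 0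
        ![![a, b]] := ⟨fun i j h => absurd (by simp) h, fun i j _ => by
          fin_cases i; fin_cases j <;> simpa [binaryDomain, or_comm]⟩
    simpa using hw.fits_of_fits hrepair (w' := w') (by simpa using hw') 0
  have fit10 := fits 1 0 (by norm_num) (by norm_num) ![1, 0] (by simp)
  have fit01 := fits 0 1 (by norm_num) (by norm_num) ![0, 1] (by simp)
  have fit11 := fits 1 1 (by norm_num) (by norm_num) ![1, 0] (by simp)
  linarith

lemma imputationSufficientLR_singleton (j : Fin 2) :
    ImputationSufficientLR Set.univ binaryDomain 0 1 {j} := by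
  intro ρ hρ _
  set a := ρ 0 j
  have ha : a = 0 ∨ a = 1 := by
    simpa [binaryDomain] using hρ 0 j trivial (Finset.mem_singleton_self j)
  refine ⟨fun k => if k = j then a else 1 - a, fun Xr hXr => ?_⟩
  refine lrLoss_le_of_forall_fit_or_row_eq_zero fun i => ?_
  have hXrj : Xr i j = a := by fin_cases i; exact hXr.1 0 j (by simp)
  have hXr01 : ∀ k, Xr i k = 0 ∨ Xr i k = 1 := fun k => by
    by_cases hk : k = j
    · exact hk ▸ hXrj ▸ ha
    · simpa [binaryDomain] using hXr.2 i k (by simpa using hk)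
  rcases ha with ha | ha
  · rcases hXr01 (1 - j) with ht | ht <;> fin_cases j <;>
      simp_all [Fin.sum_univ_two, Fin.forall_fin_two]
  · left
    fin_cases j <;> simp_all

lemma minimalImputationSetLR_singleton (j : Fin 2) :
    MinimalImputationSetLR Set.univ binaryDomain 0 1 {j} := by
  refine ⟨fun k _ => ⟨0, trivial⟩, imputationSufficientLR_singleton j, fun S _ hS => ?_⟩
  rw [Finset.card_singleton, Nat.one_le_iff_ne_zero, Ne, Finset.card_eq_zero]
  rintro rfl
  exact not_imputationSufficientLR_empty hS

/-- Theorem 4.1 (first part): there exists a linear-regression training set with a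
nonempty set of missing entries that has two distinct minimal imputation sets. -/
theorem exists_training_set_with_two_minimal_imputation_sets :
    ∃ (n d : ℕ) (X : Fin n → Fin d → ℝ) (M : Set (Fin n × Fin d))
      (D : Fin n → Fin d → Set ℝ) (y : Fin n → ℝ) (S₁ S₂ : Finset (Fin d)),
      M.Nonempty ∧
      (∀ p ∈ M, (D p.1 p.2).Nonempty) ∧
      S₁ ≠ S₂ ∧
      MinimalImputationSetLR M D X y S₁ ∧
      MinimalImputationSetLR M D X y S₂ :=
  ⟨1, 2, 0, Set.univ, binaryDomain, 1, {0}, {1}, Set.univ_nonempty,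
    fun _ _ => ⟨0, by simp [binaryDomain]⟩, by decide,
    minimalImputationSetLR_singleton 0, minimalImputationSetLR_singleton 1⟩
end

section
/- (Theorem 4.1, second part) Consider a feature matrix X ∈ ℝ^{n×d} with missing entries, each ranging over a prescribed set of reals, and a label vector y ∈ ℝⁿ. If for every repair Xʳ of X the d columns of Xʳ are linearly independent, then the minimal imputation set for linear regression over (X, y) is unique: any two imputation-sufficient sets of incomplete features of minimum cardinality are equal. -/
open scoped RealInnerProductSpace

abbrev toE {n : ℕ} (v : Fin n → ℝ) : EuclideanSpace ℝ (Fin n) := WithLp.toLp 2 v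

noncomputable def colMap {n d : ℕ} (A : Fin n → Fin d → ℝ) :
    (Fin d → ℝ) →ₗ[ℝ] EuclideanSpace ℝ (Fin n) where
  toFun w := WithLp.toLp 2 (fun i => ∑ j, A i j * w j)
  map_add' a b := by
    ext i
    simp [mul_add, Finset.sum_add_distrib]
  map_smul' c a := by
    ext i
    simp [Finset.mul_sum]
    exact Finset.sum_congr rfl fun j _ => by ring

lemma lrLoss_eq_normSq {n d : ℕ} (A : Fin n → Fin d → ℝ) (y : Fin n → ℝ) (w : Fin d → ℝ) :
    lrLoss A y w = ‖colMap A w - toE y‖ ^ 2 := by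
  rw [← real_inner_self_eq_norm_sq, PiLp.inner_apply]
  refine Finset.sum_congr rfl fun i _ => ?_
  simp only [RCLike.inner_apply, conj_trivial, PiLp.sub_apply, PiLp.toLp_apply, colMap, LinearMap.coe_mk,
    AddHom.coe_mk]
  ring

lemma exists_isMin {n d : ℕ} (A : Fin n → Fin d → ℝ) (y : Fin n → ℝ)
    (hA : LinearIndependent ℝ (fun j : Fin d => fun i : Fin n => A i j)) :
    ∃ w : Fin d → ℝ, (∀ w', lrLoss A y w ≤ lrLoss A y w') ∧
      ∀ w'', (∀ w', lrLoss A y w'' ≤ lrLoss A y w') → w'' = w := by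
  classical
  have hinj : Function.Injective (colMap A) := by
    rw [← LinearMap.ker_eq_bot, LinearMap.ker_eq_bot']
    intro w hw
    have h0 : ∑ j, w j • (fun i => A i j : Fin n → ℝ) = 0 := by
      funext i
      have h := congrArg (fun v => v i) hw
      simpa [colMap, Finset.sum_apply, mul_comm] using h
    funext j
    exact Fintype.linearIndependent_iff.mp hA w h0 j
  set K := LinearMap.range (colMap A) with hK
  obtain ⟨w0, hw0⟩ : ↑(K.orthogonalProjectionOnto (toE y)) ∈ K := (K.orthogonalProjectionOnto (toE y)).2
  have horth : ∀ u ∈ K, ⟪u, toE y - colMap A w0⟫ = 0 := by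
    intro u hu
    have h := Submodule.sub_starProjection_mem_orthogonal (K := K) (toE y)
    rw [Submodule.starProjection_apply, ← hw0] at h
    exact (Submodule.mem_orthogonal K _).mp h u hu
  have key : ∀ w', lrLoss A y w' = ‖colMap A w' - colMap A w0‖ ^ 2 + lrLoss A y w0 := by
    intro w'
    have e1 : colMap A w' - toE y
        = (colMap A w' - colMap A w0) + (colMap A w0 - toE y) := by abel
    rw [lrLoss_eq_normSq, lrLoss_eq_normSq, e1, norm_add_sq_real]
    have hz : ⟪colMap A w' - colMap A w0, colMap A w0 - toE y⟫ = 0 := by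
      have h := horth (colMap A w' - colMap A w0) ⟨w' - w0, by simp⟩
      have h2 : colMap A w0 - toE y = -(toE y - colMap A w0) := by abel
      rw [h2, inner_neg_right, h, neg_zero]
    rw [hz]; ring
  refine ⟨w0, fun w' => ?_, fun w'' hmin => ?_⟩
  · rw [key w']
    have := sq_nonneg ‖colMap A w' - colMap A w0‖
    linarith
  · have h1 : lrLoss A y w'' ≤ lrLoss A y w0 := hmin w0
    have h3 : ‖colMap A w'' - colMap A w0‖ ^ 2 = 0 := by
      have hk := key w''
      have hn := sq_nonneg ‖colMap A w'' - colMap A w0‖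
      linarith
    have h4 : colMap A w'' - colMap A w0 = 0 :=
      norm_eq_zero.mp (pow_eq_zero_iff (by norm_num : (2:ℕ) ≠ 0) |>.mp h3)
    exact hinj (sub_eq_zero.mp h4)

/-- Theorem 4.1 (second part): if the columns of every repair of `X` are linearly
independent, then the minimal imputation set for linear regression is unique. -/
theorem minimal_imputation_set_unique_of_linearIndependent_repairs
    (n d : ℕ) (X : Fin n → Fin d → ℝ) (M : Set (Fin n × Fin d))
    (D : Fin n → Fin d → Set ℝ) (hD : ∀ p ∈ M, (D p.1 p.2).Nonempty)
    (y : Fin n → ℝ)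
    (hind : ∀ Xr : Fin n → Fin d → ℝ, IsRepairLR M D X Xr →
      LinearIndependent ℝ (fun j : Fin d => fun i : Fin n => Xr i j))
    (S S' : Finset (Fin d))
    (hS : MinimalImputationSetLR M D X y S)
    (hS' : MinimalImputationSetLR M D X y S') :
    S = S' := by
  classical
  have inter : ∀ S₁ S₂ : Finset (Fin d), ImputationSufficientLR M D X y S₁ →
      ImputationSufficientLR M D X y S₂ → ImputationSufficientLR M D X y (S₁ ∩ S₂) := by
    intro S₁ S₂ h₁ h₂ ρ hρ1 hρ2
    have repFull : ∀ Z, IsRepairLR {p ∈ M | p.2 ∉ S₁ ∩ S₂} D ρ Z → IsRepairLR M D X Z := by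
      intro Z hZ
      refine ⟨fun i j hij => ?_, fun i j hij => ?_⟩
      · rw [hZ.1 i j (fun h => hij h.1), hρ2 i j (fun h => hij h.1)]
      · by_cases hj : j ∈ S₁ ∩ S₂
        · rw [hZ.1 i j (fun h => h.2 hj)]
          exact hρ1 i j hij hj
        · exact hZ.2 i j ⟨hij, hj⟩
    have exMin : ∀ Z, IsRepairLR {p ∈ M | p.2 ∉ S₁ ∩ S₂} D ρ Z →
        ∃ w, (∀ w', lrLoss Z y w ≤ lrLoss Z y w') ∧
          ∀ w'', (∀ w', lrLoss Z y w'' ≤ lrLoss Z y w') → w'' = w :=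
      fun Z hZ => exists_isMin Z y (hind Z (repFull Z hZ))
    have agree : ∀ U : Finset (Fin d), S₁ ∩ S₂ ⊆ U → ImputationSufficientLR M D X y U →
        ∀ Z Z', IsRepairLR {p ∈ M | p.2 ∉ S₁ ∩ S₂} D ρ Z →
          IsRepairLR {p ∈ M | p.2 ∉ S₁ ∩ S₂} D ρ Z' →
        (∀ i j, j ∈ U → Z i j = Z' i j) →
        ∀ w w', (∀ v, lrLoss Z y w ≤ lrLoss Z y v) → (∀ v, lrLoss Z' y w' ≤ lrLoss Z' y v) →
        w = w' := by
      intro U hTU hU Z Z' hZ hZ' hag w w' hw hw'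
      have hσ1 : ∀ i j, (i, j) ∈ M → j ∈ U →
          (fun i j => if j ∈ U then Z i j else ρ i j) i j ∈ D i j := by
        intro i j hM hjU
        simp only [if_pos hjU]
        by_cases hjT : j ∈ S₁ ∩ S₂
        · rw [hZ.1 i j (fun h => h.2 hjT)]
          exact hρ1 i j hM hjT
        · exact hZ.2 i j ⟨hM, hjT⟩
      have hσ2 : ∀ i j, ¬((i, j) ∈ M ∧ j ∈ U) →
          (fun i j => if j ∈ U then Z i j else ρ i j) i j = X i j := by
        intro i j h
        by_cases hjU : j ∈ U
        · have hM : (i, j) ∉ M := fun hm => h ⟨hm, hjU⟩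
          simp only [if_pos hjU]
          rw [hZ.1 i j (fun h' => hM h'.1), hρ2 i j (fun h' => hM h'.1)]
        · simp only [if_neg hjU]
          exact hρ2 i j (fun h' => hjU (hTU h'.2))
      obtain ⟨wc, hwc⟩ := hU _ hσ1 hσ2
      have hZrep : IsRepairLR {p ∈ M | p.2 ∉ U} D
          (fun i j => if j ∈ U then Z i j else ρ i j) Z := by
        refine ⟨fun i j h => ?_, fun i j h => ?_⟩
        · by_cases hjU : j ∈ U
          · simp [hjU]
          · simp only [if_neg hjU]
            exact hZ.1 i j (fun h' => h ⟨h'.1, hjU⟩)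
        · exact hZ.2 i j ⟨h.1, fun hT' => h.2 (hTU hT')⟩
      have hZ'rep : IsRepairLR {p ∈ M | p.2 ∉ U} D
          (fun i j => if j ∈ U then Z i j else ρ i j) Z' := by
        refine ⟨fun i j h => ?_, fun i j h => ?_⟩
        · by_cases hjU : j ∈ U
          · simp only [if_pos hjU]; exact (hag i j hjU).symm
          · simp only [if_neg hjU]
            exact hZ'.1 i j (fun h' => h ⟨h'.1, hjU⟩)
        · exact hZ'.2 i j ⟨h.1, fun hT' => h.2 (hTU hT')⟩
      obtain ⟨m, hm, hmu⟩ := exMin Z hZ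
      obtain ⟨m', hm', hmu'⟩ := exMin Z' hZ'
      have e1 : w = m := hmu w hw
      have e2 : wc = m := hmu wc (hwc Z hZrep)
      have e3 : wc = m' := hmu' wc (hwc Z' hZ'rep)
      have e4 : w' = m' := hmu' w' hw'
      rw [e1, ← e2, e3, ← e4]
    obtain ⟨Z0, hZ0⟩ : ∃ Z0, IsRepairLR {p ∈ M | p.2 ∉ S₁ ∩ S₂} D ρ Z0 := by
      refine ⟨fun i j => if h : (i, j) ∈ {p ∈ M | p.2 ∉ S₁ ∩ S₂} then (hD (i, j) h.1).choose
        else ρ i j, fun i j h => dif_neg h, fun i j h => ?_⟩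
      simp only [dif_pos h]
      exact (hD (i, j) h.1).choose_spec
    obtain ⟨w0, hw0, _⟩ := exMin Z0 hZ0
    refine ⟨w0, fun Z hZ w' => ?_⟩
    have hZ3rep : IsRepairLR {p ∈ M | p.2 ∉ S₁ ∩ S₂} D ρ
        (fun i j => if j ∈ S₁ then Z0 i j else Z i j) := by
      refine ⟨fun i j h => ?_, fun i j h => ?_⟩
      · by_cases hj : j ∈ S₁
        · simp only [if_pos hj]; exact hZ0.1 i j h
        · simp only [if_neg hj]; exact hZ.1 i j h
      · by_cases hj : j ∈ S₁
        · simp only [if_pos hj]; exact hZ0.2 i j h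
        · simp only [if_neg hj]; exact hZ.2 i j h
    obtain ⟨w3, hw3, _⟩ := exMin _ hZ3rep
    obtain ⟨wZ, hwZ, _⟩ := exMin Z hZ
    have e1 : w0 = w3 := agree S₁ Finset.inter_subset_left h₁ Z0 _ hZ0 hZ3rep
      (fun i j hj => by simp [hj]) w0 w3 hw0 hw3
    have hag2 : ∀ i j, j ∈ S₂ → (if j ∈ S₁ then Z0 i j else Z i j) = Z i j := by
      intro i j hj2
      by_cases hj1 : j ∈ S₁
      · have hjT : j ∈ S₁ ∩ S₂ := Finset.mem_inter.mpr ⟨hj1, hj2⟩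
        have h0 : (i, j) ∉ {p : Fin n × Fin d | p ∈ M ∧ p.2 ∉ S₁ ∩ S₂} := fun h => h.2 hjT
        simp only [if_pos hj1]
        rw [hZ0.1 i j h0, hZ.1 i j h0]
      · simp [hj1]
    have e2 : w3 = wZ := agree S₂ Finset.inter_subset_right h₂ _ Z hZ3rep hZ
      (fun i j hj => hag2 i j hj) w3 wZ hw3 hwZ
    have e : w0 = wZ := e1.trans e2
    rw [e]
    exact hwZ w'
  have h1 : S.card ≤ (S ∩ S').card :=
    hS.2.2 (S ∩ S') (fun j hj => hS.1 j (Finset.mem_inter.mp hj).1) (inter S S' hS.2.1 hS'.2.1)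
  have h2 : S'.card ≤ (S' ∩ S).card :=
    hS'.2.2 (S' ∩ S) (fun j hj => hS'.1 j (Finset.mem_inter.mp hj).1) (inter S' S hS'.2.1 hS.2.1)
  have e1 : S ∩ S' = S := Finset.eq_of_subset_of_card_le Finset.inter_subset_left h1
  have e2 : S' ∩ S = S' := Finset.eq_of_subset_of_card_le Finset.inter_subset_left h2
  exact Finset.Subset.antisymm (e1 ▸ Finset.inter_subset_right)
    (e2 ▸ Finset.inter_subset_right)
end

section
/- (Zero-coefficient property of certain models for linear regression) Consider a feature matrix X ∈ ℝ^{n×d} with a set M of missing entries, where each missing entry may take any real value, and a label vector y ∈ ℝⁿ. Suppose w ∈ ℝ^d is a certain model, i.e., w minimizes ‖Xʳw − y‖₂² for every repair Xʳ of X. Then w_j = 0 for every incomplete feature j (every column j containing a missing entry). -/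
section LinearRegression

variable {n d : ℕ} {X X' : Fin n → Fin d → ℝ} {y : Fin n → ℝ} {w : Fin d → ℝ}

theorem lrLoss_congr_of_eq_on_support (hX : ∀ i k, w k ≠ 0 → X i k = X' i k) :
    lrLoss X y w = lrLoss X' y w := by
  refine Finset.sum_congr rfl fun i _ => ?_
  congr 2
  refine Finset.sum_congr rfl fun k _ => ?_
  by_cases hk : w k = 0
  · simp [hk]
  · rw [hX i k hk]

theorem sq_residual_le_lrLoss (X : Fin n → Fin d → ℝ) (y : Fin n → ℝ) (w : Fin d → ℝ)
    (i : Fin n) : ((∑ k, X i k * w k) - y i) ^ 2 ≤ lrLoss X y w :=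
  Finset.single_le_sum (f := fun i => ((∑ k, X i k * w k) - y i) ^ 2)
    (fun _ _ => sq_nonneg _) (Finset.mem_univ i)

theorem sum_update_mul (v w : Fin d → ℝ) (j : Fin d) (t : ℝ) :
    ∑ k, Function.update v j t k * w k = ∑ k, v k * w k + (t - v j) * w j := by
  have hv : Function.update v j t = v + Pi.single j (t - v j) := by
    ext k
    by_cases hk : k = j <;> simp [hk]
  simp only [hv, Pi.add_apply, add_mul, Finset.sum_add_distrib, Pi.single_apply, ite_mul,
    zero_mul, Finset.sum_ite_eq', Finset.mem_univ, if_true]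

theorem exists_lt_lrLoss_update {j : Fin d} (hwj : w j ≠ 0) (i : Fin n) (C : ℝ) :
    ∃ t, C < lrLoss (Function.update X i (Function.update (X i) j t)) y w := by
  set r := (∑ k, X i k * w k) - y i
  set t := X i j + (|C| + 1 - r) / w j
  refine ⟨t, ?_⟩
  have hres : (∑ k, Function.update (X i) j t k * w k) - y i = |C| + 1 := by
    rw [sum_update_mul, show t - X i j = (|C| + 1 - r) / w j by ring]
    field_simp
    ring
  have hbound := sq_residual_le_lrLoss (Function.update X i (Function.update (X i) j t)) y w i
  rw [Function.update_self, hres] at hbound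
  nlinarith [abs_nonneg C, le_abs_self C]

end LinearRegression

/-- Zero-coefficient property: if `w` minimizes the least-squares loss over every
repair of `X` (where each missing entry in `M` may take any real value), then the
coefficient of every incomplete feature is zero. -/
theorem certain_model_zero_on_incomplete_features
    (n d : ℕ) (X : Fin n → Fin d → ℝ) (M : Set (Fin n × Fin d)) (y : Fin n → ℝ)
    (w : Fin d → ℝ)
    (hw : ∀ Xr : Fin n → Fin d → ℝ, (∀ i j, (i, j) ∉ M → Xr i j = X i j) →
      ∀ w' : Fin d → ℝ, lrLoss Xr y w ≤ lrLoss Xr y w')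
    (j : Fin d) (hj : ∃ i, (i, j) ∈ M) :
    w j = 0 := by
  obtain ⟨i, hij⟩ := hj
  by_contra hwj
  set w₀ := Function.update w j 0
  obtain ⟨t, hlt⟩ := exists_lt_lrLoss_update (X := X) (y := y) hwj i (lrLoss X y w₀)
  set Xr := Function.update X i (Function.update (X i) j t)
  have hXr : ∀ i' k, (i', k) ≠ (i, j) → Xr i' k = X i' k := by
    intro i' k hne
    by_cases hi' : i' = i
    · subst hi'
      have hk : k ≠ j := fun hk => hne (by rw [hk])
      simp [Xr, hk]
    · simp [Xr, hi']
  have hrepair : ∀ i' k, (i', k) ∉ M → Xr i' k = X i' k :=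
    fun i' k hk => hXr i' k fun h => hk (h ▸ hij)
  have hw₀ : lrLoss Xr y w₀ = lrLoss X y w₀ := by
    refine lrLoss_congr_of_eq_on_support fun i' k hk => hXr i' k fun h => hk ?_
    cases h
    simp [w₀]
  linarith [hw Xr hrepair w₀]
end
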